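/- Let G be a vertex-transitive graph and A an independent set of G. Then |A| + (α(G)/|V(G)|)·|V(G) \ N[A]| ≤ α(G). Equality holds if and only if A = ∅, or |A| = α(G), or A is an imprimitive independent set (i.e., |A| < α(G) and |A|/|N[A]| = α(G)/|V(G)|). -/

import Mathlib

open scoped Classical

/-- The independence number of `G`. -/
noncomputable def indepNum {V : Type*} [Fintype V] (G : SimpleGraph V) : ℕ :=
  Nat.findGreatest
    (fun m => ∃ s : Finset V, (∀ a ∈ s, ∀ b ∈ s, ¬ G.Adj a b) ∧ s.card = m)
    (Fintype.card V)

/-- The closed neighborhood `N[A] = A ∪ N(A)` of a set of vertices. -/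
noncomputable def closedNbhd {V : Type*} [Fintype V] (G : SimpleGraph V) (A : Finset V) :
    Finset V :=
  A ∪ Finset.univ.filter (fun b => ∃ a ∈ A, G.Adj a b)

/-!
Fix a maximum independent set `B`. For every automorphism `g`, the independent set `A` can be
enlarged by the part of `g B` lying outside `N[A]`, so `|A| + |B| - |g B ∩ N[A]| ≤ α(G)`.
Averaged over the (transitive) automorphism group, `|g B ∩ N[A]|` equals `|B| |N[A]| / |V|`,
which gives `|A| |V| ≤ α(G) |N[A]|`; the stated inequality is a rearrangement of this, with
equality exactly when `|A| / |N[A]| = α(G) / |V|`.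
-/

open Finset MulAction

section TransitiveAction

variable {Γ V : Type*} [Group Γ] [Fintype Γ] [MulAction Γ V] [IsPretransitive Γ V]

theorem card_filter_smul_eq_congr (b w w' : V) :
    #{g : Γ | g • b = w} = #{g : Γ | g • b = w'} := by
  obtain ⟨h, rfl⟩ := exists_smul_eq Γ w w'
  refine card_nbij' (h * ·) (h⁻¹ * ·) ?_ ?_ ?_ ?_ <;> intro g hg <;> simp_all [mul_smul]

theorem card_filter_smul_mem (b : V) (N : Finset V) :
    #{g : Γ | g • b ∈ N} = #N * #{g : Γ | g • b = b} := by
  rw [card_eq_sum_card_fiberwise (s := {g : Γ | g • b ∈ N}) (f := (· • b)) (t := N)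
    fun g hg => (mem_filter.1 hg).2]
  simp only [filter_filter]
  rw [← smul_eq_mul, ← sum_const]
  refine sum_congr rfl fun w hw => ?_
  rw [← card_filter_smul_eq_congr b w b]
  congr 1
  ext g
  simp only [mem_filter, mem_univ, true_and, and_iff_right_iff_imp]
  rintro rfl
  exact hw

variable [Fintype V]

theorem card_mul_sum_card_filter_smul_mem (B N : Finset V) :
    Fintype.card V * ∑ g : Γ, #{b ∈ B | g • b ∈ N} = Fintype.card Γ * (#B * #N) := by
  have hswap : ∑ g : Γ, #{b ∈ B | g • b ∈ N} = ∑ b ∈ B, #{g : Γ | g • b ∈ N} := by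
    simp only [card_filter]
    exact sum_comm
  have hgroup : ∀ b : V, Fintype.card Γ = Fintype.card V * #{g : Γ | g • b = b} := fun b => by
    simpa using card_filter_smul_mem (Γ := Γ) b univ
  calc Fintype.card V * ∑ g : Γ, #{b ∈ B | g • b ∈ N}
      = ∑ b ∈ B, Fintype.card V * #{g : Γ | g • b ∈ N} := by rw [hswap, mul_sum]
    _ = ∑ _b ∈ B, Fintype.card Γ * #N := sum_congr rfl fun b _ => by
          rw [card_filter_smul_mem, hgroup b]
          ring
    _ = Fintype.card Γ * (#B * #N) := by
          rw [sum_const, smul_eq_mul]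
          ring

end TransitiveAction

section Graph

variable {V : Type*} [Fintype V] (G : SimpleGraph V)

theorem card_le_indepNum {s : Finset V} (hs : ∀ a ∈ s, ∀ b ∈ s, ¬ G.Adj a b) :
    #s ≤ indepNum G :=
  Nat.le_findGreatest (card_le_univ s) ⟨s, hs, rfl⟩

theorem exists_card_eq_indepNum :
    ∃ s : Finset V, (∀ a ∈ s, ∀ b ∈ s, ¬ G.Adj a b) ∧ #s = indepNum G :=
  Nat.findGreatest_spec (P := fun m => ∃ s : Finset V, (∀ a ∈ s, ∀ b ∈ s, ¬ G.Adj a b) ∧ #s = m)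
    (Nat.zero_le _) ⟨∅, by simp, rfl⟩

theorem subset_closedNbhd (A : Finset V) : A ⊆ closedNbhd G A :=
  subset_union_left

@[simp]
theorem closedNbhd_empty : closedNbhd G ∅ = ∅ := by
  simp [closedNbhd]

theorem not_adj_of_notMem_closedNbhd {A : Finset V} {a v : V} (ha : a ∈ A)
    (hv : v ∉ closedNbhd G A) : ¬ G.Adj a v := fun hav =>
  hv (mem_union_right _ (mem_filter.2 ⟨mem_univ v, a, ha, hav⟩))

theorem card_add_card_sdiff_closedNbhd_le {A C : Finset V}
    (hA : ∀ a ∈ A, ∀ b ∈ A, ¬ G.Adj a b) (hC : ∀ a ∈ C, ∀ b ∈ C, ¬ G.Adj a b) :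
    #A + #(C \ closedNbhd G A) ≤ indepNum G := by
  have hdisj : Disjoint A (C \ closedNbhd G A) :=
    disjoint_left.2 fun x hx hx' => (mem_sdiff.1 hx').2 (subset_closedNbhd G A hx)
  rw [← card_union_of_disjoint hdisj]
  refine card_le_indepNum G ?_
  intro a ha b hb
  rcases mem_union.1 ha with ha | ha <;> rcases mem_union.1 hb with hb | hb
  · exact hA a ha b hb
  · exact not_adj_of_notMem_closedNbhd G ha (mem_sdiff.1 hb).2
  · exact fun hab => not_adj_of_notMem_closedNbhd G hb (mem_sdiff.1 ha).2 hab.symm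
  · exact hC a (mem_sdiff.1 ha).1 b (mem_sdiff.1 hb).1

theorem closedNbhd_eq_univ_of_card_eq_indepNum {A : Finset V}
    (hA : ∀ a ∈ A, ∀ b ∈ A, ¬ G.Adj a b) (hcard : #A = indepNum G) :
    closedNbhd G A = univ := by
  refine eq_univ_of_forall fun v => by_contra fun hv => ?_
  have hsingle : ∀ a ∈ ({v} : Finset V), ∀ b ∈ ({v} : Finset V), ¬ G.Adj a b := by
    simp
  have := card_add_card_sdiff_closedNbhd_le G hA hsingle
  rw [sdiff_eq_self_of_disjoint (disjoint_singleton_left.2 hv), card_singleton] at this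
  omega

theorem card_add_card_le_indepNum_add_card_filter_mem_closedNbhd {A B : Finset V}
    (hA : ∀ a ∈ A, ∀ b ∈ A, ¬ G.Adj a b) (hB : ∀ a ∈ B, ∀ b ∈ B, ¬ G.Adj a b) (g : G ≃g G) :
    #A + #B ≤ indepNum G + #{b ∈ B | g b ∈ closedNbhd G A} := by
  set C := B.map g.toEquiv.toEmbedding
  have hC : ∀ a ∈ C, ∀ b ∈ C, ¬ G.Adj a b := by
    simp only [C, mem_map]
    rintro _ ⟨a, ha, rfl⟩ _ ⟨b, hb, rfl⟩
    simpa [g.map_adj_iff] using hB a ha b hb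
  have hinter : #(C ∩ closedNbhd G A) = #{b ∈ B | g b ∈ closedNbhd G A} := by
    rw [← filter_mem_eq_inter, filter_map, card_map]
    rfl
  have hsplit := card_sdiff_add_card_inter C (closedNbhd G A)
  have := card_add_card_sdiff_closedNbhd_le G hA hC
  rw [card_map] at hsplit
  omega

instance : Finite (G ≃g G) :=
  Finite.of_injective _ DFunLike.coe_injective

theorem card_mul_card_le_indepNum_mul_card_closedNbhd
    (htrans : ∀ u v : V, ∃ e : G ≃g G, e u = v)
    {A : Finset V} (hA : ∀ a ∈ A, ∀ b ∈ A, ¬ G.Adj a b) :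
    Fintype.card V * #A ≤ indepNum G * #(closedNbhd G A) := by
  let := Fintype.ofFinite (G ≃g G)
  have : IsPretransitive (G ≃g G) V := ⟨htrans⟩
  obtain ⟨B, hB, hBcard⟩ := exists_card_eq_indepNum G
  set S := ∑ g : G ≃g G, #{b ∈ B | g b ∈ closedNbhd G A}
  have hS : Fintype.card (G ≃g G) * #A ≤ S := by
    have := sum_le_sum (s := univ) fun g _ =>
      card_add_card_le_indepNum_add_card_filter_mem_closedNbhd G hA hB g
    simp only [sum_add_distrib, sum_const, card_univ, smul_eq_mul, hBcard] at this
    omega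
  have havg := card_mul_sum_card_filter_smul_mem (Γ := G ≃g G) B (closedNbhd G A)
  rw [hBcard] at havg
  refine le_of_mul_le_mul_left ?_ (Fintype.card_pos (α := G ≃g G))
  calc Fintype.card (G ≃g G) * (Fintype.card V * #A)
      = Fintype.card V * (Fintype.card (G ≃g G) * #A) := by ring
    _ ≤ Fintype.card V * S := Nat.mul_le_mul_left _ hS
    _ = _ := havg

theorem card_mul_eq_indepNum_mul_card_closedNbhd_iff [Nonempty V] {A : Finset V}
    (hA : ∀ a ∈ A, ∀ b ∈ A, ¬ G.Adj a b) :
    Fintype.card V * #A = indepNum G * #(closedNbhd G A) ↔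
      A = ∅ ∨ #A = indepNum G ∨
        (#A < indepNum G ∧
          (#A : ℚ) / #(closedNbhd G A) = (indepNum G : ℚ) / Fintype.card V) := by
  have hn : (Fintype.card V : ℚ) ≠ 0 := by exact_mod_cast Fintype.card_ne_zero
  constructor
  · intro h
    by_cases hA0 : A = ∅
    · exact Or.inl hA0
    by_cases hmax : #A = indepNum G
    · exact Or.inr (Or.inl hmax)
    refine Or.inr (Or.inr ⟨(card_le_indepNum G hA).lt_of_ne hmax, ?_⟩)
    have hN : (#(closedNbhd G A) : ℚ) ≠ 0 := by
      exact_mod_cast (card_pos.2 ((nonempty_iff_ne_empty.2 hA0).mono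
        (subset_closedNbhd G A))).ne'
    rw [div_eq_div_iff hN hn]
    exact_mod_cast (mul_comm _ _).trans h
  · rintro (rfl | hmax | ⟨-, hratio⟩)
    · simp
    · rw [closedNbhd_eq_univ_of_card_eq_indepNum G hA hmax, hmax, card_univ, mul_comm]
    · rcases Nat.eq_zero_or_pos #(closedNbhd G A) with hN | hN
      · have hA0 : #A = 0 := Nat.eq_zero_of_le_zero (hN ▸ card_le_card (subset_closedNbhd G A))
        rw [hA0, hN, mul_zero, mul_zero]
      · rw [div_eq_div_iff (by positivity) hn] at hratio
        exact_mod_cast (mul_comm _ _).trans hratio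

end Graph

theorem stmt6 {V : Type*} [Fintype V] [Nonempty V] (G : SimpleGraph V)
    (htrans : ∀ u v : V, ∃ e : G ≃g G, e u = v)
    (A : Finset V) (hA : ∀ a ∈ A, ∀ b ∈ A, ¬ G.Adj a b) :
    (A.card : ℚ) + (indepNum G : ℚ) / (Fintype.card V : ℚ) *
        ((Finset.univ \ closedNbhd G A).card : ℚ) ≤ (indepNum G : ℚ) ∧
      ((A.card : ℚ) + (indepNum G : ℚ) / (Fintype.card V : ℚ) *
          ((Finset.univ \ closedNbhd G A).card : ℚ) = (indepNum G : ℚ) ↔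
        A = ∅ ∨ A.card = indepNum G ∨
          (A.card < indepNum G ∧
            (A.card : ℚ) / ((closedNbhd G A).card : ℚ) =
              (indepNum G : ℚ) / (Fintype.card V : ℚ))) := by
  have hn : (0 : ℚ) < Fintype.card V := by exact_mod_cast Fintype.card_pos
  have hkey : (Fintype.card V * #A : ℚ) ≤ indepNum G * #(closedNbhd G A) := by
    exact_mod_cast card_mul_card_le_indepNum_mul_card_closedNbhd G htrans hA
  have hcompl : (#(univ \ closedNbhd G A) : ℚ) = Fintype.card V - #(closedNbhd G A) := by
    rw [card_sdiff_of_subset (subset_univ _), card_univ, Nat.cast_sub (card_le_univ _)]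
  have hdefect : (#A : ℚ) + indepNum G / Fintype.card V * #(univ \ closedNbhd G A) =
      indepNum G - (indepNum G * #(closedNbhd G A) - Fintype.card V * #A) / Fintype.card V := by
    rw [hcompl]
    field_simp
    ring
  rw [hdefect, ← card_mul_eq_indepNum_mul_card_closedNbhd_iff G hA]
  constructor
  · have := div_nonneg (sub_nonneg.2 hkey) hn.le
    linarith
  · rw [sub_eq_self, div_eq_zero_iff, or_iff_left hn.ne', sub_eq_zero, eq_comm]
    exact_mod_cast Iff.rfl
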